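/- For a square tensor A with ‖A‖_F > 0 and 0 < α < 1/‖A‖_F, the series Σ_{p≥1} α^p A^p converges and its sum equals (I − αA)^{−1} − I; in particular I − αA is invertible under the Einstein product. -/

import Mathlib

open scoped BigOperators

/-- The Einstein product. -/
def einstein {α β γ : Type*} [Fintype β] (A : α → β → ℝ) (B : β → γ → ℝ) : α → γ → ℝ :=
  fun i k => ∑ j, A i j * B j k

/-- The identity tensor under the Einstein product. -/
def identT {α : Type*} [DecidableEq α] : α → α → ℝ :=
  fun i j => if i = j then 1 else 0

/-- Einstein powers of a square tensor. -/
def einPow {α : Type*} [Fintype α] [DecidableEq α] (A : α → α → ℝ) : ℕ → (α → α → ℝ)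
  | 0 => identT
  | p + 1 => einstein A (einPow A p)

/-- Frobenius norm of a tensor. -/
noncomputable def frob {α β : Type*} [Fintype α] [Fintype β] (A : α → β → ℝ) : ℝ :=
  Real.sqrt (∑ i, ∑ j, A i j ^ 2)

/-!
Flattening the multi-indices, a square tensor is a square matrix indexed by
`(k : Fin N) → Fin (I k)`: the Einstein product is the matrix product, `identT` is `1`, Einstein
powers are matrix powers and `frob` is the Frobenius norm, which is submultiplicative and
complete. With `x = α • A` we have `‖x‖ = α ‖A‖_F < 1`, so the Neumann series `∑ xᵖ` converges
to a two-sided inverse of `1 - x`, and dropping its term `x⁰ = 1` gives the series of the theorem.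
-/

open scoped Matrix.Norms.Frobenius

section TensorAsMatrix

variable {ι κ : Type*} [Fintype ι] [Fintype κ]

theorem einPow_eq_pow [DecidableEq ι] (A : ι → ι → ℝ) (p : ℕ) :
    einPow A p = Matrix.of A ^ p := by
  induction p with
  | zero => rfl
  | succ p ih => rw [pow_succ', ← ih]; rfl

theorem frob_eq_norm (A : ι → κ → ℝ) : frob A = ‖Matrix.of A‖ := by
  simp only [frob, Matrix.frobenius_norm_def, Matrix.of_apply, Real.norm_eq_abs, Real.rpow_two,
    sq_abs, Real.sqrt_eq_rpow]

end TensorAsMatrix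

/-- For 0 < α < 1/‖A‖_F, the series Σ_{p≥1} αᵖ Aᵖ converges, I − αA is invertible
under the Einstein product, and the sum equals (I − αA)⁻¹ − I. -/
theorem tensor_resolvent {N : ℕ} {I : Fin N → ℕ}
    (A : ((k : Fin N) → Fin (I k)) → ((k : Fin N) → Fin (I k)) → ℝ)
    (α : ℝ) (hA : 0 < frob A) (hα : 0 < α) (hα' : α < 1 / frob A) :
    Summable (fun p : ℕ => α ^ (p + 1) • einPow A (p + 1)) ∧
      ∃ B : ((k : Fin N) → Fin (I k)) → ((k : Fin N) → Fin (I k)) → ℝ,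
        einstein (identT - α • A) B = identT ∧
        einstein B (identT - α • A) = identT ∧
        (∑' p : ℕ, α ^ (p + 1) • einPow A (p + 1)) = B - identT := by
  let x := α • Matrix.of A
  have hx : ‖x‖ < 1 := by
    rw [norm_smul, Real.norm_of_nonneg hα.le, ← frob_eq_norm]
    rwa [lt_div_iff₀ hA] at hα'
  have hterms (p : ℕ) : α ^ (p + 1) • einPow A (p + 1) = x ^ (p + 1) := by
    rw [einPow_eq_pow]
    exact (smul_pow α (Matrix.of A) (p + 1)).symm
  have hgeom : Summable (x ^ ·) := summable_geometric_of_norm_lt_one hx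
  refine ⟨((summable_nat_add_iff 1).2 hgeom).congr fun p => (hterms p).symm, ∑' p, x ^ p,
    mul_neg_geom_series x hx, geom_series_mul_neg x hx, ?_⟩
  rw [tsum_congr hterms]
  exact eq_sub_of_add_eq' (pow_zero x ▸ hgeom.tsum_eq_zero_add).symm
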